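/- Let A be an N×N real matrix (N ≥ 2) with nonnegative entries and row sums z_i with max_i z_i =: z < 1, and let be the matrix with â_{ij} = z_i/N. Then |1ᵀ(I − Âᵀ)⁻¹(Âᵀ − Aᵀ)(I − Âᵀ)⁻¹ 1| / N ≤ (N−1) z̄ / (1 − z̄)², where z̄ = (1/N)∑ z_i. -/

import Mathlib

/-!
Since `Âᵀ = 1 vᵀ` with `v = z / N` has rank one, Sherman–Morrison gives
`(I - Âᵀ)⁻¹ = I + 1 vᵀ / (1 - z̄)`: it is entrywise nonnegative and maps `1` to `1 / (1 - z̄) • 1`.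
As `0 ≤ a_{ji} ≤ z_j`, every entry of `Âᵀ - Aᵀ` is bounded by `(1 - 1/N) z_j`, and the triangle
inequality for the bilinear form between the nonnegative vectors `1ᵀ (I - Âᵀ)⁻¹` and
`(I - Âᵀ)⁻¹ 1` gives `|1ᵀ (I - Âᵀ)⁻¹ (Âᵀ - Aᵀ) (I - Âᵀ)⁻¹ 1| ≤ N (N - 1) z̄ / (1 - z̄)²`.
-/

open Matrix Finset

namespace Matrix

variable {m n K : Type*} [Fintype m] [Fintype n]

theorem inv_one_sub_vecMulVec [Field K] [DecidableEq n] (u v : n → K) (h : v ⬝ᵥ u ≠ 1) :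
    (1 - vecMulVec u v)⁻¹ = 1 + (1 - v ⬝ᵥ u)⁻¹ • vecMulVec u v := by
  have hc : (1 - v ⬝ᵥ u)⁻¹ * (1 - v ⬝ᵥ u) = 1 := inv_mul_cancel₀ (sub_ne_zero.mpr h.symm)
  apply inv_eq_right_inv
  rw [sub_mul, one_mul, mul_add, mul_one, Matrix.mul_smul, vecMulVec_mul_vecMulVec, vecMulVec_smul,
    smul_smul]
  linear_combination (norm := module) hc • vecMulVec u v

theorem inv_one_sub_vecMulVec_mulVec_self [Field K] [DecidableEq n] (u v : n → K)
    (h : v ⬝ᵥ u ≠ 1) : (1 - vecMulVec u v)⁻¹ *ᵥ u = (1 - v ⬝ᵥ u)⁻¹ • u := by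
  have hc : (1 - v ⬝ᵥ u)⁻¹ * (1 - v ⬝ᵥ u) = 1 := inv_mul_cancel₀ (sub_ne_zero.mpr h.symm)
  rw [inv_one_sub_vecMulVec u v h, add_mulVec, one_mulVec, smul_mulVec, vecMulVec_mulVec]
  simp only [op_smul_eq_smul, smul_smul]
  linear_combination (norm := module) -(hc • u)

theorem inv_one_sub_vecMulVec_nonneg [Field K] [LinearOrder K] [IsStrictOrderedRing K]
    [DecidableEq n] {u v : n → K} (hu : 0 ≤ u) (hv : 0 ≤ v) (h : v ⬝ᵥ u < 1) (i j : n) :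
    0 ≤ (1 - vecMulVec u v)⁻¹ i j := by
  rw [inv_one_sub_vecMulVec u v h.ne, add_apply, smul_apply, vecMulVec_apply, one_apply,
    smul_eq_mul]
  have : 0 ≤ (1 - v ⬝ᵥ u)⁻¹ * (u i * v j) :=
    mul_nonneg (inv_nonneg.mpr (sub_nonneg.mpr h.le)) (mul_nonneg (hu i) (hv j))
  split_ifs <;> linarith

theorem abs_dotProduct_mulVec_le [Field K] [LinearOrder K] [IsStrictOrderedRing K]
    {M : Matrix m n K} {s a : m → K} {t b : n → K} (hs : 0 ≤ s) (ht : 0 ≤ t)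
    (hM : ∀ i j, |M i j| ≤ a i * b j) : |s ⬝ᵥ M *ᵥ t| ≤ (s ⬝ᵥ a) * (b ⬝ᵥ t) := by
  calc |s ⬝ᵥ M *ᵥ t| = |∑ i, ∑ j, s i * M i j * t j| := by
        simp only [dotProduct, mulVec, mul_sum, mul_assoc]
    _ ≤ ∑ i, ∑ j, s i * (a i * b j) * t j := by
        refine (abs_sum_le_sum_abs _ _).trans (sum_le_sum fun i _ => ?_)
        refine (abs_sum_le_sum_abs _ _).trans (sum_le_sum fun j _ => ?_)
        rw [abs_mul, abs_mul, abs_of_nonneg (hs i), abs_of_nonneg (ht j)]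
        exact mul_le_mul_of_nonneg_right (mul_le_mul_of_nonneg_left (hM i j) (hs i)) (ht j)
    _ = (s ⬝ᵥ a) * (b ⬝ᵥ t) := by
        simp only [dotProduct, sum_mul_sum]
        exact sum_congr rfl fun i _ => sum_congr rfl fun j _ => by ring

theorem abs_one_dotProduct_inv_mul_inv_mulVec_one_le [Field K] [LinearOrder K]
    [IsStrictOrderedRing K] [DecidableEq n] {v b : n → K} {M : Matrix n n K} (hv : 0 ≤ v)
    (hσ : v ⬝ᵥ 1 < 1) (hM : ∀ i j, |M i j| ≤ b j) :
    |1 ⬝ᵥ ((1 - vecMulVec (1 : n → K) v)⁻¹ * M * (1 - vecMulVec 1 v)⁻¹) *ᵥ 1|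
      ≤ Fintype.card n * (∑ j, b j) / (1 - v ⬝ᵥ 1) ^ 2 := by
  set B : Matrix n n K := (1 - vecMulVec 1 v)⁻¹
  have hB1 : B *ᵥ 1 = (1 - v ⬝ᵥ 1)⁻¹ • 1 := inv_one_sub_vecMulVec_mulVec_self _ _ hσ.ne
  have hs : 0 ≤ 1 ᵥ* B := fun j => by
    simp only [vecMul, dotProduct, Pi.one_apply, one_mul, Pi.zero_apply]
    exact sum_nonneg fun i _ => inv_one_sub_vecMulVec_nonneg zero_le_one hv hσ i j
  have ht : 0 ≤ B *ᵥ 1 := hB1 ▸ smul_nonneg (inv_nonneg.mpr (sub_nonneg.mpr hσ.le)) zero_le_one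
  rw [← mulVec_mulVec, ← mulVec_mulVec, dotProduct_mulVec]
  have hM' : ∀ i j, |M i j| ≤ (1 : n → K) i * b j := fun i j => (hM i j).trans_eq (one_mul _).symm
  refine (abs_dotProduct_mulVec_le hs ht hM').trans_eq ?_
  rw [← dotProduct_mulVec, hB1, dotProduct_smul, dotProduct_smul, one_dotProduct_one,
    smul_eq_mul, smul_eq_mul, dotProduct_one b]
  field_simp

end Matrix

theorem abs_mul_sub_le_one_sub_mul {K : Type*} [Field K] [LinearOrder K] [IsStrictOrderedRing K]
    {θ a z : K} (hθ : 2 * θ ≤ 1) (ha : 0 ≤ a) (haz : a ≤ z) : |θ * z - a| ≤ (1 - θ) * z := by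
  rw [abs_le]
  constructor <;> nlinarith

theorem stmt_18 (N : ℕ) (hN : 2 ≤ N) (A : Matrix (Fin N) (Fin N) ℝ)
    (hpos : ∀ i j, 0 ≤ A i j) (z : Fin N → ℝ)
    (hrow : ∀ i, ∑ j, A i j = z i)
    (zmax : ℝ) (hzmax : ∀ i, z i ≤ zmax) (hzmax1 : zmax < 1)
    (Ahat : Matrix (Fin N) (Fin N) ℝ) (hAhat : ∀ i j, Ahat i j = z i / (N : ℝ))
    (zbar : ℝ) (hzbar : zbar = (1 / (N : ℝ)) * ∑ i, z i) :
    |(fun _ => (1 : ℝ)) ⬝ᵥ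
        ((1 - Ahatᵀ)⁻¹ * (Ahatᵀ - Aᵀ) * (1 - Ahatᵀ)⁻¹).mulVec (fun _ => (1 : ℝ))|
        / (N : ℝ)
      ≤ ((N : ℝ) - 1) * zbar / (1 - zbar) ^ 2 := by
  have hNpos : (0 : ℝ) < N := by positivity
  have hsum : ∑ i, z i = N * zbar := by rw [hzbar]; field_simp
  have hzbar1 : zbar < 1 := by
    have : ∑ i, z i ≤ ∑ _i : Fin N, zmax := sum_le_sum fun i _ => hzmax i
    rw [sum_const, card_univ, Fintype.card_fin, nsmul_eq_mul, hsum] at this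
    nlinarith
  set v : Fin N → ℝ := fun j => z j / N
  have hAhatT : Ahatᵀ = vecMulVec 1 v := by ext i j; simp [hAhat, v]
  have hv : v ⬝ᵥ 1 = zbar := by
    simp only [v, dotProduct_one, ← sum_div, hsum]; field_simp
  have hv0 : 0 ≤ v := fun j => div_nonneg (hrow j ▸ sum_nonneg fun k _ => hpos j k) hNpos.le
  have hdiff : ∀ i j, |(Ahatᵀ - Aᵀ) i j| ≤ (1 - 1 / N) * z j := by
    intro i j
    have hθ : 2 * (1 / N : ℝ) ≤ 1 := by
      rw [mul_one_div, div_le_one hNpos]; exact_mod_cast hN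
    have hAz : A j i ≤ z j :=
      hrow j ▸ single_le_sum (fun k _ => hpos j k) (mem_univ i)
    simpa [hAhat, div_eq_inv_mul] using abs_mul_sub_le_one_sub_mul hθ (hpos j i) hAz
  have hbound := abs_one_dotProduct_inv_mul_inv_mulVec_one_le hv0 (hv.trans_lt hzbar1) hdiff
  rw [← hAhatT, hv, ← mul_sum, hsum, Fintype.card_fin] at hbound
  calc _ ≤ N * ((1 - 1 / N) * (N * zbar)) / (1 - zbar) ^ 2 / N := by gcongr; exact hbound
    _ = ((N : ℝ) - 1) * zbar / (1 - zbar) ^ 2 := by field_simp
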